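/- For the partition (2,1,…,1) ⊢ n, the divisibility condition defining the integral shuffle algebra 𝒮 implies, after tensoring with ℚ(q₁,q₂), the wheel conditions: R(x, xq₂, xq₁q₂, z₄,…,z_n) = 0 and R(x, xq₂, xq₁^{-1}, z₄,…,z_n) = 0 for any R ∈ 𝒮 ⊗ ℚ(q₁,q₂) in n ≥ 3 variables. -/

import Mathlib

/- Framework: we work inside the field FF of rational functions over ℤ in
countably many variables q₁, q₂, z₀, z₁, z₂, … (the fraction field of
MvPolynomial ℕ ℤ).  A Laurent polynomial R(z₁,…,z_n) over ℤ[q₁^±,q₂^±] is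
encoded by its finitely supported coefficient function
c : (Fin n → ℤ) →₀ FF (with values in the Laurent subring ℤ[q₁^±,q₂^±]),
and `evalC c w` is its value ∑_m c_m ∏ w_i^{m_i} at a point w.  Since the z_i
are algebraically independent, equalities of such expressions at the generic
point w = (z₀,…,z_{n-1}) are equalities of rational functions. -/

noncomputable section

abbrev FF : Type := FractionRing (MvPolynomial ℕ ℤ)

noncomputable def q₁ : FF := algebraMap (MvPolynomial ℕ ℤ) FF (MvPolynomial.X 0)
noncomputable def q₂ : FF := algebraMap (MvPolynomial ℕ ℤ) FF (MvPolynomial.X 1)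
/-- the generic variables z_i (also used as the variables x_i of the
specializations in Definition `SatisfiesDiv`) -/
noncomputable def zz (i : ℕ) : FF := algebraMap (MvPolynomial ℕ ℤ) FF (MvPolynomial.X (i + 2))
noncomputable def q₃ : FF := (q₁ * q₂)⁻¹

noncomputable def zeta (x : FF) : FF :=
  (1 - x * q₁) * (1 - x * q₂) * (1 - q₁ * q₂ / x) / (1 - x)

/-- the Laurent polynomial subring ℤ[q₁^{±1},q₂^{±1}] ⊆ FF -/
noncomputable def Lq : Subring FF := Subring.closure {q₁, q₁⁻¹, q₂, q₂⁻¹}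

/-- the Laurent polynomial subring ℤ[q₁^{±1},q₂^{±1}][x₁^{±1},…,x_k^{±1}] ⊆ FF,
where x_i := zz i -/
noncomputable def Lqx (k : ℕ) : Subring FF :=
  Subring.closure ({q₁, q₁⁻¹, q₂, q₂⁻¹} ∪ (Set.range fun i : Fin k => zz i)
    ∪ (Set.range fun i : Fin k => (zz i)⁻¹))

/-- value of the Laurent polynomial with coefficients c at the point w -/
noncomputable def evalC {n : ℕ} (c : (Fin n → ℤ) →₀ FF) (w : Fin n → FF) : FF :=
  ∑ m ∈ c.support, c m * ∏ i, w i ^ (m i)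

/-- the specialization point (x₁, x₁q₂, …, x₁q₂^{n₁-1}, …, x_k, …, x_kq₂^{n_k-1})
attached to a partition (n₁,…,n_k), with x_i := zz i -/
noncomputable def specTuple {n : ℕ} (k : ℕ) (nn : Fin k → ℕ) : Fin n → FF :=
  fun j => (((List.finRange k).flatMap fun i =>
    (List.range (nn i)).map fun s => zz i * q₂ ^ s).getD j 1)

/-- the divisor (eqn "divisible by") attached to a partition (n₁ ≥ … ≥ n_k) -/
noncomputable def divisor (k : ℕ) (nn : Fin k → ℕ) : FF :=
  (∏ i : Fin k, ((1 - q₂) ^ (nn i) *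
      ∏ s ∈ Finset.Icc 1 (nn i - 1), zeta (q₂ ^ s) ^ (nn i - s))) *
  ∏ i : Fin k, ∏ j ∈ Finset.univ.filter (fun j : Fin k => i < j),
    ((∏ a ∈ Finset.Icc (1 : ℤ) ((nn i : ℤ) - 1), ∏ b ∈ Finset.Icc (0 : ℤ) ((nn j : ℤ) - 1),
        (zz i * q₁ - zz j * q₂ ^ (b - a))) *
     (∏ a ∈ Finset.Icc (1 : ℤ) ((nn i : ℤ) - 1), ∏ b ∈ Finset.Icc (0 : ℤ) ((nn j : ℤ) - 1),
        (zz j * q₁ - zz i * q₂ ^ (a - b - 1))))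

/-- coefficients lie in ℤ[q₁^{±1},q₂^{±1}] -/
def HasLqCoeffs {n : ℕ} (c : (Fin n → ℤ) →₀ FF) : Prop := ∀ m ∈ c.support, c m ∈ Lq

/-- the Laurent polynomial is symmetric in z₁,…,z_n -/
def IsSymmC {n : ℕ} (c : (Fin n → ℤ) →₀ FF) : Prop :=
  ∀ σ : Equiv.Perm (Fin n), ∀ m : Fin n → ℤ, c (m ∘ σ) = c m

/-- the divisibility conditions of Definition "shuffle": for every partition
(n₁ ≥ … ≥ n_k) ⊢ n, the specialization is divisible by `divisor` in
ℤ[q₁^{±1},q₂^{±1}][x₁^{±1},…,x_k^{±1}] -/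
def SatisfiesDiv {n : ℕ} (c : (Fin n → ℤ) →₀ FF) : Prop :=
  ∀ (k : ℕ) (nn : Fin k → ℕ), (∀ i, 0 < nn i) → Antitone nn → (∑ i, nn i) = n →
    ∃ g ∈ Lqx k, evalC c (specTuple k nn) = divisor k nn * g

/-- membership in the integral shuffle algebra 𝒮 (in degree n) -/
def InS {n : ℕ} (c : (Fin n → ℤ) →₀ FF) : Prop :=
  HasLqCoeffs c ∧ IsSymmC c ∧ SatisfiesDiv c


/- STATEMENT 9: over ℚ(q₁,q₂) (i.e. for 𝒮 ⊗ ℚ(q₁,q₂)), the divisibility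
conditions defining 𝒮 imply the wheel conditions
  R(x, xq₂, xq₁q₂, z₄,…,z_n) = 0 and R(x, xq₂, xq₁⁻¹, z₄,…,z_n) = 0.
An element of 𝒮 ⊗ ℚ(q₁,q₂) is a symmetric Laurent polynomial with coefficients
in the subfield ℚ(q₁,q₂) ⊆ FF whose specializations at the partitions
(n₁ ≥ … ≥ n_k) ⊢ n are divisible by `divisor` in the Laurent polynomial ring
ℚ(q₁,q₂)[x₁^{±1},…,x_k^{±1}].  The wheel vanishings are stated at the generic
point x = z₀, (z₄,…,z_n) = (z₃,…,z_{n-1}). -/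

/-- the subfield ℚ(q₁,q₂) ⊆ FF -/
noncomputable def K0 : Subfield FF := Subfield.closure {q₁, q₂}

/-- the Laurent polynomial ring ℚ(q₁,q₂)[x₁^{±1},…,x_k^{±1}] ⊆ FF -/
noncomputable def Kx (k : ℕ) : Subring FF :=
  Subring.closure ((K0 : Set FF) ∪ (Set.range fun i : Fin k => zz i)
    ∪ (Set.range fun i : Fin k => (zz i)⁻¹))

/- Proof idea: at the partition (2,1,…,1) the specialization R(x₁, x₁q₂, x₂, …, x_{n-1})
equals `divisor · g` with g a Laurent polynomial, and the divisor contains the two linear factors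
(x₁q₁ - x₂q₂⁻¹) and (x₂q₁ - x₁). Substituting x₂ := x₁q₁q₂, resp. x₂ := x₁q₁⁻¹, kills one of
them while g stays finite, so R vanishes at the corresponding wheel point. Since g and the
coefficients of R live in FF rather than in a polynomial ring, the substitution is carried out on
fractions whose denominator it does not kill. -/

section Specialization

variable {R K L : Type*} [CommRing R] [Field K] [Algebra R K] [Field L]

/-- `x = p / s` in `K` with `ψ s ≠ 0`, and `y = ψ p / ψ s`. -/
def SpecializesTo (ψ : R →+* L) (x : K) (y : L) : Prop :=
  ∃ p s : R, ψ s ≠ 0 ∧ x * algebraMap R K s = algebraMap R K p ∧ y * ψ s = ψ p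

variable {ψ : R →+* L}

theorem specializesTo_algebraMap (p : R) : SpecializesTo ψ (algebraMap R K p) (ψ p) :=
  ⟨p, 1, by simp, by simp, by simp⟩

theorem specializesTo_zero : SpecializesTo ψ (0 : K) 0 := by
  simpa using specializesTo_algebraMap (K := K) (ψ := ψ) 0

theorem specializesTo_one : SpecializesTo ψ (1 : K) 1 := by
  simpa using specializesTo_algebraMap (K := K) (ψ := ψ) 1

namespace SpecializesTo

variable {x x₁ x₂ : K} {y y₁ y₂ : L}

theorem unique [IsFractionRing R K] (h₁ : SpecializesTo ψ x y₁) (h₂ : SpecializesTo ψ x y₂) :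
    y₁ = y₂ := by
  obtain ⟨p₁, s₁, hs₁, ha₁, hb₁⟩ := h₁
  obtain ⟨p₂, s₂, hs₂, ha₂, hb₂⟩ := h₂
  have hp : p₁ * s₂ = p₂ * s₁ := by
    apply IsFractionRing.injective R K
    rw [map_mul, map_mul, ← ha₁, ← ha₂]
    ring
  have hψ : ψ p₁ * ψ s₂ = ψ p₂ * ψ s₁ := by rw [← map_mul, ← map_mul, hp]
  refine mul_right_cancel₀ (mul_ne_zero hs₁ hs₂) ?_
  linear_combination ψ s₂ * hb₁ - ψ s₁ * hb₂ + hψ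

theorem add (h₁ : SpecializesTo ψ x₁ y₁) (h₂ : SpecializesTo ψ x₂ y₂) :
    SpecializesTo ψ (x₁ + x₂) (y₁ + y₂) := by
  obtain ⟨p₁, s₁, hs₁, ha₁, hb₁⟩ := h₁
  obtain ⟨p₂, s₂, hs₂, ha₂, hb₂⟩ := h₂
  refine ⟨p₁ * s₂ + p₂ * s₁, s₁ * s₂, by rw [map_mul]; exact mul_ne_zero hs₁ hs₂, ?_, ?_⟩
  · simp only [map_add, map_mul]
    linear_combination algebraMap R K s₂ * ha₁ + algebraMap R K s₁ * ha₂
  · simp only [map_add, map_mul]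
    linear_combination ψ s₂ * hb₁ + ψ s₁ * hb₂

theorem mul (h₁ : SpecializesTo ψ x₁ y₁) (h₂ : SpecializesTo ψ x₂ y₂) :
    SpecializesTo ψ (x₁ * x₂) (y₁ * y₂) := by
  obtain ⟨p₁, s₁, hs₁, ha₁, hb₁⟩ := h₁
  obtain ⟨p₂, s₂, hs₂, ha₂, hb₂⟩ := h₂
  refine ⟨p₁ * p₂, s₁ * s₂, by rw [map_mul]; exact mul_ne_zero hs₁ hs₂, ?_, ?_⟩
  · simp only [map_mul]
    linear_combination x₂ * algebraMap R K s₂ * ha₁ + algebraMap R K p₁ * ha₂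
  · simp only [map_mul]
    linear_combination y₂ * ψ s₂ * hb₁ + ψ p₁ * hb₂

theorem neg (h : SpecializesTo ψ x y) : SpecializesTo ψ (-x) (-y) := by
  obtain ⟨p, s, hs, ha, hb⟩ := h
  refine ⟨-p, s, hs, ?_, ?_⟩ <;> rw [map_neg]
  exacts [by linear_combination -ha, by linear_combination -hb]

theorem sub (h₁ : SpecializesTo ψ x₁ y₁) (h₂ : SpecializesTo ψ x₂ y₂) :
    SpecializesTo ψ (x₁ - x₂) (y₁ - y₂) := by
  simpa only [sub_eq_add_neg] using h₁.add h₂.neg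

theorem inv [IsFractionRing R K] (h : SpecializesTo ψ x y) (hy : x ≠ 0 → y ≠ 0) :
    SpecializesTo ψ x⁻¹ y⁻¹ := by
  by_cases hx : x = 0
  · subst hx
    rw [h.unique specializesTo_zero, inv_zero, inv_zero]
    exact specializesTo_zero
  obtain ⟨p, s, hs, ha, hb⟩ := h
  have hy₀ := hy hx
  have hp : ψ p ≠ 0 := hb ▸ mul_ne_zero hy₀ hs
  exact ⟨s, p, hp, by rw [← ha]; field_simp, by rw [← hb]; field_simp⟩

theorem pow (h : SpecializesTo ψ x y) (k : ℕ) : SpecializesTo ψ (x ^ k) (y ^ k) := by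
  induction k with
  | zero => simpa using specializesTo_one
  | succ k ih => simpa only [pow_succ] using ih.mul h

theorem zpow [IsFractionRing R K] (h : SpecializesTo ψ x y) (hy : y ≠ 0) (k : ℤ) :
    SpecializesTo ψ (x ^ k) (y ^ k) := by
  rcases k with k | k
  · simpa using h.pow k
  · simpa only [zpow_negSucc] using (h.pow (k + 1)).inv fun _ => pow_ne_zero _ hy

theorem prod {ι : Type*} (s : Finset ι) {f : ι → K} {g : ι → L}
    (h : ∀ i ∈ s, SpecializesTo ψ (f i) (g i)) :
    SpecializesTo ψ (∏ i ∈ s, f i) (∏ i ∈ s, g i) := by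
  induction s using Finset.cons_induction with
  | empty => simpa using specializesTo_one
  | cons a s ha ih =>
    simp only [Finset.prod_cons, Finset.forall_mem_cons] at h ⊢
    exact h.1.mul (ih h.2)

theorem sum {ι : Type*} (s : Finset ι) {f : ι → K} {g : ι → L}
    (h : ∀ i ∈ s, SpecializesTo ψ (f i) (g i)) :
    SpecializesTo ψ (∑ i ∈ s, f i) (∑ i ∈ s, g i) := by
  induction s using Finset.cons_induction with
  | empty => simpa using specializesTo_zero
  | cons a s ha ih =>
    simp only [Finset.sum_cons, Finset.forall_mem_cons] at h ⊢
    exact h.1.add (ih h.2)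

end SpecializesTo

variable (ψ) in
def specializableSubring : Subring K where
  carrier := {x | ∃ y, SpecializesTo ψ x y}
  mul_mem' := fun ⟨_, h₁⟩ ⟨_, h₂⟩ => ⟨_, h₁.mul h₂⟩
  one_mem' := ⟨_, specializesTo_one⟩
  add_mem' := fun ⟨_, h₁⟩ ⟨_, h₂⟩ => ⟨_, h₁.add h₂⟩
  zero_mem' := ⟨_, specializesTo_zero⟩
  neg_mem' := fun ⟨_, h⟩ => ⟨_, h.neg⟩

theorem specializesTo_mul_zero {x x' : K} (hx : x ∈ specializableSubring ψ)
    (hx' : SpecializesTo ψ x' 0) : SpecializesTo ψ (x * x') 0 := by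
  obtain ⟨y, hy⟩ := hx
  simpa using hy.mul hx'

theorem specializesTo_prod_zero {ι : Type*} [DecidableEq ι] {s : Finset ι} {f : ι → K}
    (hf : ∀ i ∈ s, f i ∈ specializableSubring ψ) {i : ι} (hi : i ∈ s)
    (h0 : SpecializesTo ψ (f i) 0) : SpecializesTo ψ (∏ j ∈ s, f j) 0 := by
  rw [← Finset.prod_erase_mul s f hi]
  exact specializesTo_mul_zero (prod_mem fun j hj => hf j (Finset.mem_of_mem_erase hj)) h0

def specializationFixedSubfield [IsFractionRing R K] (ψ : R →+* K) : Subfield K where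
  carrier := {x | SpecializesTo ψ x x}
  mul_mem' := SpecializesTo.mul
  one_mem' := specializesTo_one
  add_mem' := SpecializesTo.add
  zero_mem' := specializesTo_zero
  neg_mem' := SpecializesTo.neg
  inv_mem' := fun _ h => h.inv id

end Specialization

theorem algebraMap_X_ne_zero (k : ℕ) :
    algebraMap (MvPolynomial ℕ ℤ) FF (MvPolynomial.X k) ≠ 0 :=
  (map_ne_zero_iff _ (IsFractionRing.injective _ _)).mpr (MvPolynomial.X_ne_zero k)

theorem q₁_ne_zero : q₁ ≠ 0 := algebraMap_X_ne_zero 0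

theorem q₂_ne_zero : q₂ ≠ 0 := algebraMap_X_ne_zero 1

theorem zz_ne_zero (i : ℕ) : zz i ≠ 0 := algebraMap_X_ne_zero (i + 2)

theorem q₁_mem_K0 : q₁ ∈ K0 := Subfield.subset_closure (by simp)

theorem q₂_mem_K0 : q₂ ∈ K0 := Subfield.subset_closure (by simp)

theorem zeta_mem_K0 {x : FF} (hx : x ∈ K0) : zeta x ∈ K0 := by
  unfold zeta
  have hq₁ := q₁_mem_K0
  have hq₂ := q₂_mem_K0
  exact div_mem (mul_mem (mul_mem (sub_mem (one_mem _) (mul_mem hx hq₁))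
    (sub_mem (one_mem _) (mul_mem hx hq₂))) (sub_mem (one_mem _) (div_mem (mul_mem hq₁ hq₂) hx)))
    (sub_mem (one_mem _) hx)

theorem zz_mem_Kx {k : ℕ} (i : Fin k) : zz i ∈ Kx k :=
  Subring.subset_closure (Or.inl (Or.inr ⟨i, rfl⟩))

theorem K0_le_Kx (k : ℕ) : (K0 : Set FF) ⊆ Kx k :=
  fun _ hx => Subring.subset_closure (Or.inl (Or.inl hx))

/-- Values of `q₁, q₂, zz 0, zz 1, zz 2, …` under the substitution that moves the point
`(x, x q₂, z₁, z₂, …)` of the partition `(2, 1, …, 1)` to the wheel point `(x, x q₂, t, z₃, …)`. -/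
def wheelVar (t : FF) : ℕ → FF
  | 0 => q₁
  | 1 => q₂
  | 2 => zz 0
  | 3 => t
  | k + 4 => zz (k + 3)

theorem wheelVar_ne_zero {t : FF} (ht : t ≠ 0) : ∀ k, wheelVar t k ≠ 0
  | 0 => q₁_ne_zero
  | 1 => q₂_ne_zero
  | 2 => zz_ne_zero 0
  | 3 => ht
  | _ + 4 => zz_ne_zero _

def wheelSubst (t : FF) : MvPolynomial ℕ ℤ →+* FF :=
  MvPolynomial.eval₂Hom (Int.castRingHom FF) (wheelVar t)

theorem specializesTo_wheelSubst_X (t : FF) (k : ℕ) :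
    SpecializesTo (wheelSubst t) (algebraMap (MvPolynomial ℕ ℤ) FF (MvPolynomial.X k))
      (wheelVar t k) := by
  simpa [wheelSubst] using
    specializesTo_algebraMap (K := FF) (ψ := wheelSubst t) (MvPolynomial.X k)

theorem specializesTo_zz (t : FF) (i : ℕ) :
    SpecializesTo (wheelSubst t) (zz i) (wheelVar t (i + 2)) :=
  specializesTo_wheelSubst_X t (i + 2)

theorem K0_le_fixedSubfield (t : FF) : K0 ≤ specializationFixedSubfield (wheelSubst t) :=
  Subfield.closure_le.mpr <| by
    rintro x (rfl | rfl)
    exacts [specializesTo_wheelSubst_X t 0, specializesTo_wheelSubst_X t 1]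

theorem Kx_le_specializableSubring {t : FF} (ht : t ≠ 0) (k : ℕ) :
    Kx k ≤ specializableSubring (wheelSubst t) :=
  Subring.closure_le.mpr <| by
    rintro x ((hx | ⟨i, rfl⟩) | ⟨i, rfl⟩)
    · exact ⟨x, K0_le_fixedSubfield t hx⟩
    · exact ⟨_, specializesTo_zz t i⟩
    · exact ⟨_, (specializesTo_zz t i).inv fun _ => wheelVar_ne_zero ht _⟩

theorem specializesTo_evalC {ψ : MvPolynomial ℕ ℤ →+* FF} {n : ℕ} {c : (Fin n → ℤ) →₀ FF}
    (hc : ∀ m ∈ c.support, SpecializesTo ψ (c m) (c m)) {v w : Fin n → FF}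
    (hv : ∀ j, SpecializesTo ψ (v j) (w j)) (hw : ∀ j, w j ≠ 0) :
    SpecializesTo ψ (evalC c v) (evalC c w) :=
  .sum _ fun m hm => (hc m hm).mul (.prod _ fun j _ => (hv j).zpow (hw j) (m j))

/-- The partition `(2, 1, …, 1)` of `m + 3`. -/
def twoOnes (m : ℕ) : Fin (m + 2) → ℕ := fun i => if i = 0 then 2 else 1

theorem twoOnes_zero (m : ℕ) : twoOnes m 0 = 2 := if_pos rfl

theorem twoOnes_succ (m : ℕ) (i : Fin (m + 1)) : twoOnes m i.succ = 1 :=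
  if_neg (Fin.succ_ne_zero i)

theorem twoOnes_pos (m : ℕ) (i : Fin (m + 2)) : 0 < twoOnes m i := by
  unfold twoOnes; split_ifs <;> norm_num

theorem twoOnes_antitone (m : ℕ) : Antitone (twoOnes m) := by
  intro i j hij
  unfold twoOnes
  split_ifs with hj hi <;> simp_all

theorem sum_twoOnes (m : ℕ) : ∑ i, twoOnes m i = m + 3 := by
  simp only [Fin.sum_univ_succ, twoOnes_zero, twoOnes_succ, Finset.sum_const, Finset.card_univ,
    Fintype.card_fin, smul_eq_mul, mul_one]
  omega

theorem specTuple_twoOnes (m : ℕ) (j : Fin (m + 3)) :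
    specTuple (m + 2) (twoOnes m) j =
      if (j : ℕ) = 0 then zz 0 else if (j : ℕ) = 1 then zz 0 * q₂ else zz ((j : ℕ) - 1) := by
  have hlist : ((List.finRange (m + 2)).flatMap fun i =>
      (List.range (twoOnes m i)).map fun s => zz i * q₂ ^ s) =
      zz 0 :: zz 0 * q₂ :: (List.finRange (m + 1)).map fun i : Fin (m + 1) => zz ((i : ℕ) + 1) := by
    rw [List.finRange_succ, List.flatMap_cons, twoOnes_zero, List.flatMap_map,
      List.map_eq_flatMap (l := List.finRange (m + 1))]
    simp [twoOnes_succ, List.range_succ]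
  obtain ⟨j, hj⟩ := j
  unfold specTuple
  rw [hlist]
  match j with
  | 0 => simp
  | 1 => simp
  | r + 2 =>
    rw [List.getD_cons_succ, List.getD_cons_succ, List.getD_eq_getElem _ _ (by simp; omega)]
    simp

theorem specializesTo_divisor_twoOnes {t : FF} (ht : t ≠ 0) (m : ℕ)
    (hwheel : (zz 0 * q₁ - t * q₂⁻¹) * (t * q₁ - zz 0) = 0) :
    SpecializesTo (wheelSubst t) (divisor (m + 2) (twoOnes m)) 0 := by
  have hKx := Kx_le_specializableSubring ht (m + 2)
  have hfactor (i j : Fin (m + 2)) (e : ℤ) : zz i * q₁ - zz j * q₂ ^ e ∈ Kx (m + 2) :=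
    sub_mem (mul_mem (zz_mem_Kx i) (K0_le_Kx _ q₁_mem_K0))
      (mul_mem (zz_mem_Kx j) (K0_le_Kx _ (zpow_mem q₂_mem_K0 e)))
  have hblock (i j : Fin (m + 2)) : (∏ a ∈ Finset.Icc (1 : ℤ) (twoOnes m i - 1),
      ∏ b ∈ Finset.Icc (0 : ℤ) (twoOnes m j - 1), (zz i * q₁ - zz j * q₂ ^ (b - a))) *
      (∏ a ∈ Finset.Icc (1 : ℤ) (twoOnes m i - 1), ∏ b ∈ Finset.Icc (0 : ℤ) (twoOnes m j - 1),
        (zz j * q₁ - zz i * q₂ ^ (a - b - 1))) ∈ specializableSubring (wheelSubst t) :=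
    hKx (mul_mem (prod_mem fun _ _ => prod_mem fun _ _ => hfactor i j _)
      (prod_mem fun _ _ => prod_mem fun _ _ => hfactor j i _))
  have h01 : (1 : Fin (m + 2)) ∈ Finset.univ.filter (fun j : Fin (m + 2) => 0 < j) :=
    Finset.mem_filter.mpr ⟨Finset.mem_univ _, Fin.lt_def.mpr (by simp)⟩
  unfold divisor
  refine specializesTo_mul_zero (hKx (K0_le_Kx _ (prod_mem fun i _ => mul_mem
    (pow_mem (sub_mem (one_mem _) q₂_mem_K0) _)
    (prod_mem fun s _ => pow_mem (zeta_mem_K0 (pow_mem q₂_mem_K0 s)) _)))) ?_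
  refine specializesTo_prod_zero (fun i _ => prod_mem fun j _ => hblock i j)
    (Finset.mem_univ 0) ?_
  refine specializesTo_prod_zero (fun j _ => hblock 0 j) h01 ?_
  -- the (0, 1) block of the divisor is `(x₁q₁ - x₂q₂⁻¹) (x₂q₁ - x₁)`
  rw [twoOnes_zero, show twoOnes m 1 = 1 from twoOnes_succ m 0]
  simp only [Nat.cast_ofNat, Int.reduceSub, Finset.Icc_self, Nat.cast_one, sub_self,
    Fin.coe_ofNat_eq_mod, Nat.zero_mod, Nat.one_mod, Finset.prod_singleton, zero_sub, zpow_neg,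
    zpow_ofNat, pow_one, sub_zero, pow_zero, mul_one]
  have hq₁ : SpecializesTo (wheelSubst t) q₁ q₁ := K0_le_fixedSubfield t q₁_mem_K0
  have hq₂ : SpecializesTo (wheelSubst t) q₂⁻¹ q₂⁻¹ := K0_le_fixedSubfield t (inv_mem q₂_mem_K0)
  have hz₀ : SpecializesTo (wheelSubst t) (zz 0) (zz 0) := specializesTo_zz t 0
  have hz₁ : SpecializesTo (wheelSubst t) (zz 1) t := specializesTo_zz t 1
  rw [← hwheel]
  exact ((hz₀.mul hq₁).sub (hz₁.mul hq₂)).mul ((hz₁.mul hq₁).sub hz₀)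

def wheelPoint (n : ℕ) (t : FF) : Fin n → FF := fun j =>
  if (j : ℕ) = 0 then zz 0 else if (j : ℕ) = 1 then zz 0 * q₂ else if (j : ℕ) = 2 then t else zz j

theorem wheelPoint_ne_zero {n : ℕ} {t : FF} (ht : t ≠ 0) (j : Fin n) : wheelPoint n t j ≠ 0 := by
  unfold wheelPoint
  split_ifs
  exacts [zz_ne_zero 0, mul_ne_zero (zz_ne_zero 0) q₂_ne_zero, ht, zz_ne_zero _]

theorem specializesTo_specTuple_twoOnes (m : ℕ) (t : FF) (j : Fin (m + 3)) :
    SpecializesTo (wheelSubst t) (specTuple (m + 2) (twoOnes m) j) (wheelPoint (m + 3) t j) := by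
  have hq₂ : SpecializesTo (wheelSubst t) q₂ q₂ := K0_le_fixedSubfield t q₂_mem_K0
  rw [specTuple_twoOnes]
  obtain ⟨j, hj⟩ := j
  match j with
  | 0 => exact specializesTo_zz t 0
  | 1 => exact (specializesTo_zz t 0).mul hq₂
  | 2 => exact specializesTo_zz t 1
  | r + 3 => exact specializesTo_zz t (r + 2)

theorem evalC_wheelPoint_eq_zero {m : ℕ} {c : (Fin (m + 3) → ℤ) →₀ FF}
    (hcoeff : ∀ μ ∈ c.support, c μ ∈ K0)
    (hdiv : ∃ g ∈ Kx (m + 2),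
      evalC c (specTuple (m + 2) (twoOnes m)) = divisor (m + 2) (twoOnes m) * g)
    {t : FF} (ht : t ≠ 0) (hwheel : (zz 0 * q₁ - t * q₂⁻¹) * (t * q₁ - zz 0) = 0) :
    evalC c (wheelPoint (m + 3) t) = 0 := by
  obtain ⟨g, hg, hfactor⟩ := hdiv
  obtain ⟨g', hg'⟩ := Kx_le_specializableSubring ht _ hg
  have hspec := specializesTo_evalC (fun μ hμ => K0_le_fixedSubfield t (hcoeff μ hμ))
    (specializesTo_specTuple_twoOnes m t) (wheelPoint_ne_zero ht)
  rw [hfactor] at hspec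
  simpa using hspec.unique ((specializesTo_divisor_twoOnes ht m hwheel).mul hg')

theorem statement9_general (n : ℕ) (hn : 3 ≤ n) (c : (Fin n → ℤ) →₀ FF)
    (hcoeff : ∀ m ∈ c.support, c m ∈ K0)
    (hdiv : ∀ (k : ℕ) (nn : Fin k → ℕ), (∀ i, 0 < nn i) → Antitone nn →
      (∑ i, nn i) = n →
      ∃ g ∈ Kx k, evalC c (specTuple k nn) = divisor k nn * g) :
    evalC c (fun j => if (j : ℕ) = 0 then zz 0
      else if (j : ℕ) = 1 then zz 0 * q₂
      else if (j : ℕ) = 2 then zz 0 * q₁ * q₂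
      else zz j) = 0
    ∧ evalC c (fun j => if (j : ℕ) = 0 then zz 0
      else if (j : ℕ) = 1 then zz 0 * q₂
      else if (j : ℕ) = 2 then zz 0 * q₁⁻¹
      else zz j) = 0 := by
  obtain ⟨m, rfl⟩ : ∃ m, n = m + 3 := ⟨n - 3, by omega⟩
  have hdiv₂ := hdiv (m + 2) (twoOnes m) (twoOnes_pos m) (twoOnes_antitone m) (sum_twoOnes m)
  have hz₀ := zz_ne_zero 0
  have hq₁ := q₁_ne_zero
  have hq₂ := q₂_ne_zero
  constructor
  · refine evalC_wheelPoint_eq_zero hcoeff hdiv₂ (by positivity) ?_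
    field_simp
    ring
  · refine evalC_wheelPoint_eq_zero hcoeff hdiv₂ (by positivity) ?_
    field_simp
    ring

theorem statement9 (n : ℕ) (hn : 3 ≤ n) (c : (Fin n → ℤ) →₀ FF)
    (hcoeff : ∀ m ∈ c.support, c m ∈ K0)
    (hsym : IsSymmC c)
    (hdiv : ∀ (k : ℕ) (nn : Fin k → ℕ), (∀ i, 0 < nn i) → Antitone nn →
      (∑ i, nn i) = n →
      ∃ g ∈ Kx k, evalC c (specTuple k nn) = divisor k nn * g) :
    evalC c (fun j => if (j : ℕ) = 0 then zz 0
      else if (j : ℕ) = 1 then zz 0 * q₂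
      else if (j : ℕ) = 2 then zz 0 * q₁ * q₂
      else zz j) = 0
    ∧ evalC c (fun j => if (j : ℕ) = 0 then zz 0
      else if (j : ℕ) = 1 then zz 0 * q₂
      else if (j : ℕ) = 2 then zz 0 * q₁⁻¹
      else zz j) = 0 :=
  statement9_general n hn c hcoeff hdiv

end
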